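/- In the multiplex state diagram with b = 3 and m = 2, the number of closed walks of length n at state ⟨2,1⟩ satisfies a(n) = 8a(n−1) − 13a(n−2) for n ≥ 4, with a(1) = 1, a(2) = 4, a(3) = 22, giving the sequence 1, 4, 22, 124, 706, 4036, .... -/

import Mathlib

/-!
A state is a multiset of three landing times, each of multiplicity at most two, so it has shape
`⟨2,1⟩` (`D p q`) or `⟨1,1,1⟩` (`T p q r`). A predecessor of a state `t` is obtained by
choosing a nonempty sub-multiset of `t`, delaying it by one time step and throwing the remaining
balls at time `0`. Hence a `D`-state has four predecessors of shape `D` and one of shape `T`, and a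
`T`-state has three of shape `D` and four of shape `T`. Walks of length one from `⟨2,1⟩` reach
exactly the states with a ball at time `0`, which every predecessor of `t` has except the one
delaying all of `t`; so there are `4` walks of length two to each `D`-state and `6` to each
`T`-state, and inductively the number of walks of length `k + 2` to a state depends only on its
shape. These two numbers evolve by the matrix `[[4, 1], [3, 4]]`, whose characteristic polynomial
`x² - 8x + 13` gives the recurrence.
-/

namespace Multiplex

section Walks

variable {V : Type*} (P : V → Prop) (E : V → V → Prop)

def walkSet (s t : V) (n : ℕ) : Set (Fin (n + 1) → V) :=
  {f | f 0 = s ∧ f (Fin.last n) = t ∧ (∀ k, P (f k)) ∧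
    ∀ k : Fin n, E (f k.castSucc) (f k.succ)}

variable {P E}

lemma walkSet_succ {s t : V} (ht : P t) (n : ℕ) :
    walkSet P E s t (n + 1) =
      (Fin.snoc · t) '' ⋃ g ∈ {g | P g ∧ E g t}, walkSet P E s g n := by
  ext f
  simp only [Set.mem_image, Set.mem_iUnion, Set.mem_ofPred_eq, exists_prop]
  constructor
  · rintro ⟨h0, hlast, hP, hE⟩
    refine ⟨Fin.init f, ⟨f (Fin.last n).castSucc, ⟨hP _, ?_⟩, ?_, rfl, fun k => hP _,
      fun k => ?_⟩, ?_⟩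
    · simpa [hlast] using hE (Fin.last n)
    · exact h0
    · have := hE k.castSucc
      rwa [Fin.succ_castSucc] at this
    · rw [← hlast, Fin.snoc_init_self]
  · rintro ⟨f, ⟨g, ⟨-, hgt⟩, h0, hlast, hP, hE⟩, rfl⟩
    refine ⟨by rw [← Fin.castSucc_zero, Fin.snoc_castSucc, h0], by simp, fun k => ?_,
      fun k => ?_⟩
    · induction k using Fin.lastCases with
      | last => simpa using ht
      | cast k => simpa using hP k
    · induction k using Fin.lastCases with
      | last => simpa [hlast] using hgt
      | cast k => simpa only [Fin.succ_castSucc, Fin.snoc_castSucc] using hE k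

lemma walkSet_one {s t : V} (hs : P s) (ht : P t) [Decidable (E s t)] :
    (walkSet P E s t 1).ncard = if E s t then 1 else 0 := by
  split_ifs with hst
  · rw [Set.ncard_eq_one]
    refine ⟨![s, t], Set.eq_singleton_iff_unique_mem.2 ⟨⟨rfl, rfl, ?_, ?_⟩, ?_⟩⟩
    · intro k; fin_cases k <;> assumption
    · intro k; fin_cases k; exact hst
    · rintro f ⟨h0, h1, -, -⟩
      ext k; fin_cases k <;> assumption
  · have hempty : walkSet P E s t 1 = ∅ :=
      Set.eq_empty_of_forall_notMem fun f ⟨h0, h1, _, hE⟩ => hst (h0 ▸ h1 ▸ hE 0)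
    rw [hempty, Set.ncard_empty]

lemma walkSet_finite (hfin : ∀ t, {g | P g ∧ E g t}.Finite) (s t : V) (n : ℕ) :
    (walkSet P E s t n).Finite := by
  induction n generalizing t with
  | zero =>
    refine Set.Subsingleton.finite fun f hf f' hf' => funext fun k => ?_
    rw [Fin.fin_one_eq_zero k, hf.1, hf'.1]
  | succ n ih =>
    by_cases ht : P t
    · rw [walkSet_succ ht]
      exact ((hfin t).biUnion fun g _ => ih g).image _
    · exact Set.finite_empty.subset fun f hf => ht (hf.2.1 ▸ hf.2.2.1 _)

lemma ncard_walkSet_succ (hfin : ∀ t, {g | P g ∧ E g t}.Finite) {s t : V} (ht : P t)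
    (n : ℕ) (preds : Finset V) (hpreds : ∀ g, g ∈ preds ↔ P g ∧ E g t) :
    (walkSet P E s t (n + 1)).ncard = ∑ g ∈ preds, (walkSet P E s g n).ncard := by
  have hset : {g | P g ∧ E g t} = ↑preds := by ext; simp [hpreds]
  rw [walkSet_succ ht,
    Set.ncard_image_of_injective _ fun x y h => by simpa using congrArg Fin.init h, hset,
    Set.Finite.ncard_biUnion preds.finite_toSet (fun g _ => walkSet_finite hfin s g n),
    finsum_mem_coe_finset]
  intro g _ g' _ hne
  exact Set.disjoint_left.2 fun f hf hf' => hne (hf.2.1.symm.trans hf'.2.1)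

end Walks

open Finsupp

def IsState (g : ℕ →₀ ℕ) : Prop := (∀ i, g i ≤ 2) ∧ g.sum (fun _ x => x) = 3

def Transition (f g : ℕ →₀ ℕ) : Prop := ∀ i, f (i + 1) ≤ g i

/-- Two balls land at time `p` and one at time `q`; `D 0 1` is the state `⟨2,1⟩`. -/
noncomputable def D (p q : ℕ) : ℕ →₀ ℕ := single p 2 + single q 1

noncomputable def T (p q r : ℕ) : ℕ →₀ ℕ := single p 1 + single q 1 + single r 1

noncomputable def count (n : ℕ) (t : ℕ →₀ ℕ) : ℕ :=
  (walkSet IsState Transition (D 0 1) t n).ncard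

lemma finite_preds (t : ℕ →₀ ℕ) : {g | IsState g ∧ Transition g t}.Finite := by
  refine (Set.finite_Iic (single 0 2 + mapDomain Nat.succ t)).subset ?_
  rintro g ⟨⟨hle, -⟩, htr⟩ (_ | i)
  · simpa [mapDomain_of_notMem_range] using hle 0
  · simpa [mapDomain_apply Nat.succ_injective] using htr i

lemma D_apply (p q j : ℕ) : D p q j = (if p = j then 2 else 0) + (if q = j then 1 else 0) := by
  simp [D, single_apply]

lemma T_apply (p q r j : ℕ) :
    T p q r j = (if p = j then 1 else 0) + (if q = j then 1 else 0) + (if r = j then 1 else 0) := by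
  simp [T, single_apply]

lemma isState_D {p q : ℕ} (hpq : p ≠ q) : IsState (D p q) := by
  refine ⟨fun i => ?_, by simp [D, sum_add_index', sum_single_index]⟩
  grind [D_apply]

lemma isState_T {p q r : ℕ} (hpq : p ≠ q) (hpr : p ≠ r) (hqr : q ≠ r) :
    IsState (T p q r) := by
  refine ⟨fun i => ?_, by simp [T, sum_add_index', sum_single_index]⟩
  grind [T_apply]

lemma transition_D_zero_one_iff (g : ℕ →₀ ℕ) : Transition (D 0 1) g ↔ 1 ≤ g 0 := by
  refine ⟨fun h => by simpa [D] using h 0, fun h i => ?_⟩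
  rcases i with _ | i
  · simpa [D] using h
  · simp [D_apply]

noncomputable def predsD (p q : ℕ) : Finset (ℕ →₀ ℕ) :=
  {D 0 (p + 1), D 0 (q + 1), D (p + 1) 0, D (p + 1) (q + 1), T 0 (p + 1) (q + 1)}

noncomputable def predsT (p q r : ℕ) : Finset (ℕ →₀ ℕ) :=
  {D 0 (p + 1), D 0 (q + 1), D 0 (r + 1),
    T 0 (p + 1) (q + 1), T 0 (p + 1) (r + 1), T 0 (q + 1) (r + 1), T (p + 1) (q + 1) (r + 1)}

lemma mem_predsD_iff {p q : ℕ} (hpq : p ≠ q) (g : ℕ →₀ ℕ) :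
    g ∈ predsD p q ↔ IsState g ∧ Transition g (D p q) := by
  constructor
  · simp only [predsD, Finset.mem_insert, Finset.mem_singleton]
    rintro (rfl | rfl | rfl | rfl | rfl)
    all_goals
      refine ⟨?_, fun i => by grind [D_apply, T_apply]⟩
      first | exact isState_D (by omega) | exact isState_T (by omega) (by omega) (by omega)
  · rintro ⟨⟨hle, hsum⟩, htr⟩
    have hq : g (q + 1) ≤ 1 := by simpa [D_apply, hpq] using htr q
    have hg : g = single 0 (g 0) + single (p + 1) (g (p + 1)) + single (q + 1) (g (q + 1)) := by
      ext (_ | j)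
      · simp
      · have := htr j
        simp only [D_apply, Finsupp.add_apply, single_apply] at this ⊢
        grind
    have ha := hle 0
    have hb := hle (p + 1)
    generalize g 0 = a, g (p + 1) = b, g (q + 1) = c at hg ha hb hq
    subst hg
    simp only [implies_true, sum_add_index', sum_single_index] at hsum
    simp only [predsD, Finset.mem_insert, Finset.mem_singleton]
    interval_cases a <;> interval_cases b <;> interval_cases c <;> simp_all [D, T, add_comm]

lemma mem_predsT_iff {p q r : ℕ} (hpq : p ≠ q) (hpr : p ≠ r) (hqr : q ≠ r)
    (g : ℕ →₀ ℕ) :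
    g ∈ predsT p q r ↔ IsState g ∧ Transition g (T p q r) := by
  constructor
  · simp only [predsT, Finset.mem_insert, Finset.mem_singleton]
    rintro (rfl | rfl | rfl | rfl | rfl | rfl | rfl)
    all_goals
      refine ⟨?_, fun i => by grind [D_apply, T_apply]⟩
      first | exact isState_D (by omega) | exact isState_T (by omega) (by omega) (by omega)
  · rintro ⟨⟨hle, hsum⟩, htr⟩
    have hp : g (p + 1) ≤ 1 := by grind [T_apply, htr p]
    have hq : g (q + 1) ≤ 1 := by grind [T_apply, htr q]
    have hr : g (r + 1) ≤ 1 := by grind [T_apply, htr r]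
    have hg : g = single 0 (g 0) + single (p + 1) (g (p + 1)) + single (q + 1) (g (q + 1)) +
        single (r + 1) (g (r + 1)) := by
      ext (_ | j)
      · simp
      · have := htr j
        simp only [T_apply, Finsupp.add_apply, single_apply] at this ⊢
        grind
    have ha := hle 0
    generalize g 0 = a, g (p + 1) = b, g (q + 1) = c, g (r + 1) = d at hg ha hp hq hr
    subst hg
    simp only [implies_true, sum_add_index', sum_single_index] at hsum
    simp only [predsT, Finset.mem_insert, Finset.mem_singleton]
    interval_cases a <;> interval_cases b <;> interval_cases c <;> interval_cases d <;>
      simp_all [D, T, add_comm]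

lemma sum_predsD {p q : ℕ} (hpq : p ≠ q) (F : (ℕ →₀ ℕ) → ℕ) :
    ∑ g ∈ predsD p q, F g = F (D 0 (p + 1)) + F (D 0 (q + 1)) + F (D (p + 1) 0) +
      F (D (p + 1) (q + 1)) + F (T 0 (p + 1) (q + 1)) := by
  rw [predsD, Finset.sum_insert, Finset.sum_insert, Finset.sum_insert, Finset.sum_insert,
    Finset.sum_singleton]
  · ring
  -- any two of these states already differ at time `0`, `p + 1` or `q + 1`
  all_goals
    simp only [Finset.mem_insert, Finset.mem_singleton, not_or]
    repeat' constructor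
    all_goals
      intro h
      have h0 := DFunLike.congr_fun h 0
      have hp := DFunLike.congr_fun h (p + 1)
      have hq := DFunLike.congr_fun h (q + 1)
      simp only [D_apply, T_apply] at h0 hp hq
      grind

lemma sum_predsT {p q r : ℕ} (hpq : p ≠ q) (hpr : p ≠ r) (hqr : q ≠ r)
    (F : (ℕ →₀ ℕ) → ℕ) :
    ∑ g ∈ predsT p q r, F g = F (D 0 (p + 1)) + F (D 0 (q + 1)) + F (D 0 (r + 1)) +
      F (T 0 (p + 1) (q + 1)) + F (T 0 (p + 1) (r + 1)) + F (T 0 (q + 1) (r + 1)) +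
      F (T (p + 1) (q + 1) (r + 1)) := by
  rw [predsT, Finset.sum_insert, Finset.sum_insert, Finset.sum_insert, Finset.sum_insert,
    Finset.sum_insert, Finset.sum_insert, Finset.sum_singleton]
  · ring
  all_goals
    simp only [Finset.mem_insert, Finset.mem_singleton, not_or]
    repeat' constructor
    all_goals
      intro h
      have h0 := DFunLike.congr_fun h 0
      have hp := DFunLike.congr_fun h (p + 1)
      have hq := DFunLike.congr_fun h (q + 1)
      have hr := DFunLike.congr_fun h (r + 1)
      simp only [D_apply, T_apply] at h0 hp hq hr
      grind

lemma count_succ_D {p q : ℕ} (hpq : p ≠ q) (m : ℕ) :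
    count (m + 1) (D p q) = count m (D 0 (p + 1)) + count m (D 0 (q + 1)) +
      count m (D (p + 1) 0) + count m (D (p + 1) (q + 1)) + count m (T 0 (p + 1) (q + 1)) := by
  rw [count, ncard_walkSet_succ finite_preds (isState_D hpq) m _ (mem_predsD_iff hpq),
    sum_predsD hpq]
  rfl

lemma count_succ_T {p q r : ℕ} (hpq : p ≠ q) (hpr : p ≠ r) (hqr : q ≠ r) (m : ℕ) :
    count (m + 1) (T p q r) = count m (D 0 (p + 1)) + count m (D 0 (q + 1)) +
      count m (D 0 (r + 1)) + count m (T 0 (p + 1) (q + 1)) + count m (T 0 (p + 1) (r + 1)) +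
      count m (T 0 (q + 1) (r + 1)) + count m (T (p + 1) (q + 1) (r + 1)) := by
  rw [count, ncard_walkSet_succ finite_preds (isState_T hpq hpr hqr) m _
    (mem_predsT_iff hpq hpr hqr), sum_predsT hpq hpr hqr]
  rfl

lemma count_one {g : ℕ →₀ ℕ} (hg : IsState g) : count 1 g = if 1 ≤ g 0 then 1 else 0 := by
  classical
  rw [count, walkSet_one (isState_D zero_ne_one) hg]
  simp only [transition_D_zero_one_iff]

mutual
def countD : ℕ → ℕ
  | 0 => 4
  | k + 1 => 4 * countD k + countT k

def countT : ℕ → ℕ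
  | 0 => 6
  | k + 1 => 3 * countD k + 4 * countT k
end

lemma countD_add_two (k : ℕ) :
    (countD (k + 2) : ℤ) = 8 * countD (k + 1) - 13 * countD k := by
  simp only [countD, countT]
  push_cast
  ring

lemma count_add_two (k : ℕ) :
    (∀ p q, p ≠ q → count (k + 2) (D p q) = countD k) ∧
      (∀ p q r, p ≠ q → p ≠ r → q ≠ r → count (k + 2) (T p q r) = countT k) := by
  induction k with
  | zero =>
    have hD {x y : ℕ} (h : x ≠ y) := count_one (isState_D h)
    have hT {x y z : ℕ} (hxy : x ≠ y) (hxz : x ≠ z) (hyz : y ≠ z) :=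
      count_one (isState_T hxy hxz hyz)
    refine ⟨fun p q hpq => ?_, fun p q r hpq hpr hqr => ?_⟩
    · simp (disch := omega) [count_succ_D hpq, hD, hT, D_apply, T_apply, countD]
    · simp (disch := omega) [count_succ_T hpq hpr hqr, hD, hT, D_apply, T_apply, countT]
  | succ k ih =>
    obtain ⟨ihD, ihT⟩ := ih
    refine ⟨fun p q hpq => ?_, fun p q r hpq hpr hqr => ?_⟩
    · simp (disch := omega) only [count_succ_D hpq, ihD, ihT, countD]
      ring
    · simp (disch := omega) only [count_succ_T hpq hpr hqr, ihD, ihT, countT]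
      ring

end Multiplex

open Multiplex in
/-- In the multiplex state diagram with `b = 3` balls and capacity `m = 2`
(states: finitely supported sequences with entries in `{0,1,2}` summing to `3`,
indexed from `0`; edge `α → β` iff `α (i+1) ≤ β i` for all `i`), the number
`a n` of closed walks of length `n` based at the state `⟨2,1⟩` satisfies
`a n = 8·a (n−1) − 13·a (n−2)` for `n ≥ 4`, with `a 1 = 1`, `a 2 = 4`,
`a 3 = 22` (giving `1, 4, 22, 124, 706, 4036, …`). -/
theorem multiplex_b3_m2_recurrence
    (a : ℕ → ℕ)
    (ha : ∀ n, a n = {f : Fin (n + 1) → (ℕ →₀ ℕ) |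
        f 0 = Finsupp.single 0 2 + Finsupp.single 1 1 ∧
        f (Fin.last n) = Finsupp.single 0 2 + Finsupp.single 1 1 ∧
        (∀ k, (∀ i, f k i ≤ 2) ∧ (f k).sum (fun _ x => x) = 3) ∧
        (∀ k : Fin n, ∀ i, f k.castSucc (i + 1) ≤ f k.succ i)}.ncard) :
    (∀ n ≥ 4, (a n : ℤ) = 8 * a (n - 1) - 13 * a (n - 2)) ∧
      a 1 = 1 ∧ a 2 = 4 ∧ a 3 = 22 := by
  have ha_count (n : ℕ) : a n = count n (D 0 1) := ha n
  have ha_countD (k : ℕ) : a (k + 2) = countD k := by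
    rw [ha_count, (count_add_two k).1 0 1 zero_ne_one]
  refine ⟨fun n hn => ?_, ?_, ha_countD 0, ha_countD 1⟩
  · obtain ⟨k, rfl⟩ := Nat.exists_eq_add_of_le' hn
    rw [show k + 4 - 1 = k + 1 + 2 by omega, show k + 4 - 2 = k + 2 by omega, ha_countD,
      ha_countD, ha_countD]
    exact countD_add_two k
  · rw [ha_count, count_one (isState_D zero_ne_one)]
    simp [D_apply]
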